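/- The horocycle-only packing density function g(a) = F(a,0) (from the general planar hyp-hor density formula with y = 0), defined for 1/√2 ≤ a < 1, attains its maximum on [1/√2, 1) at a = 1/√2, with value (4·sinh((1/2)·arccosh((1+2a²)/(2a²))) evaluated at a = 1/√2 divided by π) ≈ 0.90032. -/

import Mathlib

open Real

/-- The inverse hyperbolic cosine on [1,∞). -/
noncomputable def arcosh (x : ℝ) : ℝ := Real.log (x + Real.sqrt (x^2 - 1))

/-- The density function of the pure horocycle packings `P_a(0)`,
obtained from the general planar hyp-hor density formula by setting `y = 0`. -/
noncomputable def g (a : ℝ) : ℝ :=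
  4 * Real.sinh ((1/2) * _root_.arcosh ((1 + 2*a^2) / (2*a^2))) / π

/-!
The half-angle formula `sinh (t / 2) = √((cosh t - 1) / 2)` for `t ≥ 0` collapses the density to
`g a = 2 / (π a)`, since `(1 + 2a²) / (2a²) - 1 = 1 / (2a²)`. So `g` is decreasing, and the
value at `1/√2` is `2√2 / π`.
-/

theorem Real.sinh_half_arcosh {x : ℝ} (hx : 1 ≤ x) :
    sinh (Real.arcosh x / 2) = √((x - 1) / 2) := by
  set t := Real.arcosh x
  have hsinh_nonneg : 0 ≤ sinh (t / 2) := sinh_nonneg_iff.mpr (by linarith [arcosh_nonneg hx])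
  have hsq : sinh (t / 2) ^ 2 = (x - 1) / 2 := by
    have hcosh : cosh (2 * (t / 2)) = x := by rw [mul_div_cancel₀ t two_ne_zero, cosh_arcosh hx]
    rw [cosh_two_mul, cosh_sq] at hcosh
    linarith
  rw [← hsq, sqrt_sq hsinh_nonneg]

theorem g_eq_two_div_pi_mul {a : ℝ} (ha : 0 < a) : g a = 2 / (π * a) := by
  have hx : 1 ≤ (1 + 2 * a ^ 2) / (2 * a ^ 2) := by
    rw [le_div_iff₀ (by positivity)]; linarith
  have hhalf : ((1 + 2 * a ^ 2) / (2 * a ^ 2) - 1) / 2 = (1 / (2 * a)) ^ 2 := by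
    field_simp; ring
  rw [g, one_div_mul_eq_div, show _root_.arcosh = Real.arcosh from rfl, Real.sinh_half_arcosh hx,
    hhalf, sqrt_sq (by positivity)]
  field_simp
  ring

theorem g_antitoneOn : AntitoneOn g (Set.Ioi 0) := by
  intro a ha b hb hab
  rw [g_eq_two_div_pi_mul ha, g_eq_two_div_pi_mul hb]
  have hpia : 0 < π * a := mul_pos pi_pos ha
  gcongr

/-- On `[1/√2, 1)` the horocycle-only density `g` attains its maximum at
`a = 1/√2`, with value `≈ 0.90032`. -/
theorem horocycle_density_max :
    (∀ a : ℝ, 1 / Real.sqrt 2 ≤ a → a < 1 → g a ≤ g (1 / Real.sqrt 2)) ∧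
      |g (1 / Real.sqrt 2) - 0.90032| < 0.0001 := by
  have hpos : (0 : ℝ) < 1 / √2 := by positivity
  have hmax : g (1 / √2) = 2 * √2 / π := by
    rw [g_eq_two_div_pi_mul hpos]
    field_simp
  refine ⟨fun a ha _ => g_antitoneOn hpos (hpos.trans_le ha) ha, ?_⟩
  have hsq : √2 ^ 2 = 2 := sq_sqrt (by norm_num)
  have hsqrt_lo : (1.414213 : ℝ) < √2 := by nlinarith [sqrt_nonneg 2]
  have hsqrt_hi : √2 < 1.414214 := by nlinarith [sqrt_nonneg 2]
  have hpi_lo := pi_gt_d6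
  have hpi_hi := pi_lt_d6
  rw [hmax, abs_lt, div_sub' pi_pos.ne', lt_div_iff₀ pi_pos, div_lt_iff₀ pi_pos]
  constructor <;> nlinarith
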